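/- In the reduction of Datalog fact inference to CQA under TGDs where each relation r of arity k is replaced by r' of arity k + maxArt(Π) + 1 and each Datalog rule r_0(Y_0) ← r_1(Y_1),...,r_m(Y_m) becomes the TGD r'_1(Y_1,XX',0̄),...,r'_m(Y_m,XX',0̄) → r'_0(Y_0,XX',0̄) (with XX' comprising all rule variables padded to length maxArt(Π)), the resulting set Σ of TGDs is loop restricted: every loop pattern of Σ satisfies the LR splitting condition with body_h = ∅. -/

import Mathlib

namespace Paper

/-- Terms: constants, variables, labeled nulls. -/
inductive Term (C : Type) where
  | const : C → Term C
  | var   : ℕ → Term C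
  | null  : ℕ → Term C
deriving DecidableEq

variable {C : Type}

/-- Relational atoms. -/
structure Atom (C : Type) where
  pred : ℕ
  args : List (Term C)

/-- Substitutions on variables. -/
abbrev Subst (C : Type) := ℕ → Term C

def Term.apply (θ : Subst C) : Term C → Term C
  | .const c => .const c
  | .var v   => θ v
  | .null n  => .null n

def Atom.apply (θ : Subst C) (a : Atom C) : Atom C :=
  ⟨a.pred, a.args.map (Term.apply θ)⟩

def Term.varsF : Term C → Finset ℕ
  | .var v => {v}
  | _ => ∅

def Term.nullsF : Term C → Finset ℕ
  | .null n => {n}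
  | _ => ∅

def Atom.varsF (a : Atom C) : Finset ℕ := a.args.foldr (fun t s => t.varsF ∪ s) ∅
def Atom.nullsF (a : Atom C) : Finset ℕ := a.args.foldr (fun t s => t.nullsF ∪ s) ∅

def atomsVars (l : List (Atom C)) : Finset ℕ := l.foldr (fun a s => a.varsF ∪ s) ∅
def atomsNulls (l : List (Atom C)) : Finset ℕ := l.foldr (fun a s => a.nullsF ∪ s) ∅

/-- A single-head TGD (existential rule) `body → ∃Z head`, where the
existential variables are exactly the head variables not in the body. -/
structure TGD (C : Type) where
  body : List (Atom C)
  head : Atom C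

def TGD.varsF (σ : TGD C) : Finset ℕ := atomsVars (σ.head :: σ.body)
def TGD.nullsF (σ : TGD C) : Finset ℕ := atomsNulls (σ.head :: σ.body)
def TGD.exVars (σ : TGD C) : Finset ℕ := σ.head.varsF \ atomsVars σ.body
def TGD.varsList (σ : TGD C) : List ℕ := σ.varsF.sort (· ≤ ·)

def TGD.applyS (θ : Subst C) (σ : TGD C) : TGD C :=
  ⟨σ.body.map (Atom.apply θ), σ.head.apply θ⟩

/-- Type comparability of two terms. -/
def TypeComp (t t' : Term C) : Prop :=
  (∀ c, t = Term.const c ↔ t' = Term.const c) ∧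
  ((∃ v, t = Term.var v) ↔ (∃ v, t' = Term.var v)) ∧
  ((∃ m, t = Term.null m) ↔ (∃ m, t' = Term.null m))

/-- Position comparability of two lists of terms. -/
def PosComp (l l' : List (Term C)) : Prop :=
  l.length = l'.length ∧
  (∀ i (hi : i < l.length) (hi' : i < l'.length),
      TypeComp (l.get ⟨i, hi⟩) (l'.get ⟨i, hi'⟩)) ∧
  (∀ i j (hi : i < l.length) (hj : j < l.length) (hi' : i < l'.length) (hj' : j < l'.length),
      l.get ⟨i, hi⟩ = l.get ⟨j, hj⟩ ↔ l'.get ⟨i, hi'⟩ = l'.get ⟨j, hj'⟩) ∧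
  (∀ t, t ∈ l → t ∈ l' →
    ∀ i (hi : i < l.length) (hi' : i < l'.length),
      (l.get ⟨i, hi⟩ = t ↔ l'.get ⟨i, hi'⟩ = t))

/-- One element of a derivation path: an atom together with an
instantiated rule `ρ = σθ`, recorded as the rule and the substitution. -/
structure Step (C : Type) where
  atom : Atom C
  rule : TGD C
  θ : Subst C

def Step.inst (s : Step C) : TGD C := s.rule.applyS s.θ

/-- The nulls introduced at this step by eliminating existential variables. -/
def Step.freshNulls (s : Step C) : Finset ℕ :=
  s.rule.exVars.biUnion (fun v => (s.θ v).nullsF)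

/-- Comparability of two derivation-path elements: same rule of `Sg`, and the
tuples of substituted terms are position comparable. -/
def PairComp (s s' : Step C) : Prop :=
  s.rule = s'.rule ∧ PosComp (s.rule.varsList.map s.θ) (s'.rule.varsList.map s'.θ)

/-- Derivation path of `Sg` (Definition 3 of the paper). -/
def IsDerivationPath (Sg : Set (TGD C)) (P : List (Step C)) : Prop :=
  (∀ s ∈ P, s.rule ∈ Sg ∧ s.atom = s.rule.head.apply s.θ) ∧
  (∀ i (hi : i + 1 < P.length),
      (P.get ⟨i+1, hi⟩).atom ∈ (P.get ⟨i, Nat.lt_of_succ_lt hi⟩).inst.body) ∧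
  (∀ i j (hi : i < P.length) (hj : j < P.length), i < j →
      ∀ m ∈ (P.get ⟨i, hi⟩).freshNulls, m ∉ (P.get ⟨j, hj⟩).inst.nullsF)

/-- Comparability of derivation paths. -/
def PathComp (P Q : List (Step C)) : Prop :=
  P.length = Q.length ∧
  ∀ i (hi : i < P.length) (hi' : i < Q.length), PairComp (P.get ⟨i, hi⟩) (Q.get ⟨i, hi'⟩)

/-- Loop pattern: first and last elements comparable, no other pair comparable. -/
def IsLoopPattern (Sg : Set (TGD C)) (P : List (Step C)) : Prop :=
  IsDerivationPath Sg P ∧ 2 ≤ P.length ∧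
  (∀ (h0 : 0 < P.length) (hl : P.length - 1 < P.length),
      PairComp (P.get ⟨0, h0⟩) (P.get ⟨P.length - 1, hl⟩)) ∧
  (∀ i j (hi : i < P.length) (hj : j < P.length), i < j → ¬(i = 0 ∧ j = P.length - 1) →
      ¬ PairComp (P.get ⟨i, hi⟩) (P.get ⟨j, hj⟩))

/-- The intersection `⋂_j var(α_j)` of head-atom variables along a path. -/
def interVars (P : List (Step C)) : Set ℕ := {v | ∀ s ∈ P, v ∈ s.atom.varsF}

/-- The loop-restricted splitting condition of Definition 8. -/
def LRcond (P : List (Step C)) : Prop :=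
  ∀ i (hi : i + 1 < P.length),
    ∃ Bh Bb : List (Atom C),
      (∀ a, a ∈ (P.get ⟨i, Nat.lt_of_succ_lt hi⟩).inst.body ↔ (a ∈ Bh ∨ a ∈ Bb)) ∧
      (∀ a, ¬(a ∈ Bh ∧ a ∈ Bb)) ∧
      (P.get ⟨i+1, hi⟩).atom ∈ Bb ∧
      ((((P.get ⟨i, Nat.lt_of_succ_lt hi⟩).atom.varsF ∪ atomsVars Bh) ∩ atomsVars Bb : Finset ℕ) : Set ℕ)
        = interVars P

/-- Loop restricted (LR) sets of TGDs. -/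
def LoopRestricted (Sg : Set (TGD C)) : Prop :=
  ∀ P, IsLoopPattern Sg P → LRcond P

/-- Homomorphisms: identity on constants, nulls map to constants or nulls. -/
def IsHom (h : Term C → Term C) : Prop :=
  (∀ c, h (Term.const c) = Term.const c) ∧
  (∀ m, (∃ c, h (Term.null m) = Term.const c) ∨ (∃ m', h (Term.null m) = Term.null m'))

def Atom.mapTerms (h : Term C → Term C) (a : Atom C) : Atom C := ⟨a.pred, a.args.map h⟩

def IsDatabase (D : Set (Atom C)) : Prop :=
  D.Finite ∧ ∀ a ∈ D, ∀ t ∈ a.args, ∃ c, t = Term.const c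

/-- A Boolean conjunctive query (all variables existentially quantified). -/
structure BCQ (C : Type) where
  atoms : List (Atom C)

def SatBCQ (I : Set (Atom C)) (q : BCQ C) : Prop :=
  ∃ h, IsHom h ∧ ∀ a ∈ q.atoms, a.mapTerms h ∈ I

def SatTGD (I : Set (Atom C)) (σ : TGD C) : Prop :=
  ∀ h, IsHom h → (∀ a ∈ σ.body, a.mapTerms h ∈ I) →
    ∃ h', IsHom h' ∧ (∀ v ∈ atomsVars σ.body, h' (Term.var v) = h (Term.var v)) ∧
      σ.head.mapTerms h' ∈ I

/-- Certain-answer entailment `D ∪ Sg ⊨ q`. -/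
def Entails (D : Set (Atom C)) (Sg : Set (TGD C)) (q : BCQ C) : Prop :=
  ∀ I : Set (Atom C), D ⊆ I → (∀ σ ∈ Sg, SatTGD I σ) → SatBCQ I q

/-- Chase sequences of a given length (oblivious chase). -/
inductive ChaseSeq (D : Set (Atom C)) (Sg : Set (TGD C)) : ℕ → Set (Atom C) → Prop where
  | zero : ChaseSeq D Sg 0 D
  | succ {n : ℕ} {I : Set (Atom C)} (σ : TGD C) (θ : Subst C) :
      ChaseSeq D Sg n I → σ ∈ Sg →
      (∀ a ∈ σ.body, a.apply θ ∈ I) →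
      (∀ v ∈ σ.exVars, ∃ m, θ v = Term.null m ∧ ∀ a ∈ I, Term.null m ∉ a.args) →
      ChaseSeq D Sg (n+1) (insert (σ.head.apply θ) I)

/-- Atoms of chase level at most `k` (the level-based chase `chase^k`). -/
inductive ChaseLevel (D : Set (Atom C)) (Sg : Set (TGD C)) : ℕ → Atom C → Prop where
  | base {a : Atom C} : a ∈ D → ChaseLevel D Sg 0 a
  | mono {k : ℕ} {a : Atom C} : ChaseLevel D Sg k a → ChaseLevel D Sg (k+1) a
  | step {k : ℕ} (σ : TGD C) (θ : Subst C) : σ ∈ Sg →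
      (∀ a ∈ σ.body, ChaseLevel D Sg k (a.apply θ)) →
      ChaseLevel D Sg (k+1) (σ.head.apply θ)

def ChaseLevelEntails (D : Set (Atom C)) (Sg : Set (TGD C)) (k : ℕ) (q : BCQ C) : Prop :=
  ∃ h, IsHom h ∧ ∀ a ∈ q.atoms, ChaseLevel D Sg k (a.mapTerms h)

def Derivable (D : Set (Atom C)) (Sg : Set (TGD C)) (a : Atom C) : Prop :=
  ∃ N I, ChaseSeq D Sg N I ∧ a ∈ I

/-- Bounded derivation-depth property of a class of TGD sets. -/
def BDDP (Cl : Set (Set (TGD C))) : Prop :=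
  ∀ Sg ∈ Cl, ∀ q : BCQ C, ∃ k, ∀ D : Set (Atom C),
    IsDatabase D → Entails D Sg q → ChaseLevelEntails D Sg k q

def BDDPof (Sg : Set (TGD C)) : Prop :=
  ∀ q : BCQ C, ∃ k, ∀ D : Set (Atom C),
    IsDatabase D → Entails D Sg q → ChaseLevelEntails D Sg k q

/-- (Instantiated or symbolic) derivation trees. -/
inductive ITree (C : Type) where
  | leaf : Atom C → ITree C
  | node : Atom C → TGD C → Subst C → List (ITree C) → ITree C

def ITree.rootAtom : ITree C → Atom C
  | .leaf a => a
  | .node a _ _ _ => a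

def ITree.label : ITree C → (Atom C ⊕ (Atom C × TGD C × Subst C))
  | .leaf a => .inl a
  | .node a σ θ _ => .inr (a, σ, θ)

def ITree.depth : ITree C → ℕ
  | .leaf _ => 1
  | .node _ _ _ cs => 1 + (cs.attach.map (fun t => ITree.depth t.1)).foldr max 0
decreasing_by simp_wf; have := List.sizeOf_lt_of_mem t.2; omega

def ITree.numNodes : ITree C → ℕ
  | .leaf _ => 1
  | .node _ _ _ cs => 1 + (cs.attach.map (fun t => ITree.numNodes t.1)).sum
decreasing_by simp_wf; have := List.sizeOf_lt_of_mem t.2; omega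

def ITree.numLeaves : ITree C → ℕ
  | .leaf _ => 1
  | .node _ _ _ cs => (cs.attach.map (fun t => ITree.numLeaves t.1)).sum
decreasing_by simp_wf; have := List.sizeOf_lt_of_mem t.2; omega

def ITree.subtrees : ITree C → List (ITree C)
  | .leaf a => [.leaf a]
  | .node a σ θ cs => .node a σ θ cs :: (cs.attach.map (fun t => ITree.subtrees t.1)).flatten
decreasing_by simp_wf; have := List.sizeOf_lt_of_mem t.2; omega

/-- Instantiated derivation trees on a database `D` (Definition 7). -/
inductive IsInstTree (D : Set (Atom C)) (Sg : Set (TGD C)) : ITree C → Prop where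
  | leaf {a : Atom C} : a ∈ D → IsInstTree D Sg (.leaf a)
  | node {a : Atom C} {σ : TGD C} {θ : Subst C} {cs : List (ITree C)} :
      σ ∈ Sg → a = σ.head.apply θ →
      List.Forall₂ (fun (b : Atom C) (t : ITree C) => t.rootAtom = b.apply θ) σ.body cs →
      (∀ t ∈ cs, IsInstTree D Sg t) →
      a.varsF = ∅ →
      IsInstTree D Sg (.node a σ θ cs)

/-- Symbolic derivation trees of `Sg` (Definition 6). -/
inductive IsDerivTree (Sg : Set (TGD C)) : ITree C → Prop where
  | leafnode {a : Atom C} {σ : TGD C} {θ : Subst C} :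
      σ ∈ Sg → a = σ.head.apply θ →
      (∀ b ∈ σ.body, (Atom.apply θ b).nullsF = ∅) →
      IsDerivTree Sg (.node a σ θ [])
  | node {a : Atom C} {σ : TGD C} {θ : Subst C} {cs : List (ITree C)} :
      σ ∈ Sg → a = σ.head.apply θ → cs ≠ [] →
      List.Forall₂ (fun (b : Atom C) (t : ITree C) => t.rootAtom = b.apply θ) σ.body cs →
      (∀ t ∈ cs, IsDerivTree Sg t) →
      IsDerivTree Sg (.node a σ θ cs)

/-- A tree supports an atom if the root atom is a homomorphic image of it. -/
def Supports (T : ITree C) (a : Atom C) : Prop :=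
  ∃ h, IsHom h ∧ a.mapTerms h = T.rootAtom

def compSubst (τ : Term C → Term C) (θ : Subst C) : Subst C := fun v => τ (θ v)

/-- `InstOf T T'`: `T'` is obtained from the symbolic tree `T` by applying
further substitutions nodewise and expanding symbolic leaves by database-atom
leaves (Definition 7). -/
inductive InstOf : ITree C → ITree C → Prop where
  | leafExpand {a : Atom C} {σ : TGD C} {θ : Subst C} (τ : Term C → Term C) :
      InstOf (.node a σ θ [])
        (.node (σ.head.apply (compSubst τ θ)) σ (compSubst τ θ)
          (σ.body.map (fun b => ITree.leaf (b.apply (compSubst τ θ)))))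
  | node {a : Atom C} {σ : TGD C} {θ : Subst C} {cs cs' : List (ITree C)}
      (τ : Term C → Term C) : cs ≠ [] →
      List.Forall₂ InstOf cs cs' →
      InstOf (.node a σ θ cs) (.node (σ.head.apply (compSubst τ θ)) σ (compSubst τ θ) cs')

def AtomicEntails (D : Set (Atom C)) (Sg : Set (TGD C)) (p : ℕ) (z : List ℕ) : Prop :=
  Entails D Sg ⟨[⟨p, z.map Term.var⟩]⟩

/-- BDTDP with a concrete tree-depth bound `k`. -/
def BDTDPbound (Sg : Set (TGD C)) (k : ℕ) : Prop :=
  ∀ (p : ℕ) (z : List ℕ) (D : Set (Atom C)), IsDatabase D →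
    (AtomicEntails D Sg p z ↔
      ∃ (T : ITree C) (n : List (Term C)),
        IsInstTree D Sg T ∧ T.depth ≤ k ∧ Supports T ⟨p, n⟩ ∧
        ∃ h, IsHom h ∧ (z.map Term.var).map h = n)

def BDTDPof (Sg : Set (TGD C)) : Prop := ∃ k, BDTDPbound Sg k

/-- Bounded derivation tree depth property of a class of TGD sets. -/
def BDTDP (Cl : Set (Set (TGD C))) : Prop := ∀ Sg ∈ Cl, BDTDPof Sg

/-- The five loop pattern types of generalised loop restriction. -/
def TypeI (P : List (Step C)) : Prop := LRcond P

def TypeII (P : List (Step C)) : Prop :=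
  ∃ (i : ℕ) (hi : i + 1 < P.length),
    ∃ Bh Bb : List (Atom C),
      (∀ a, a ∈ (P.get ⟨i, Nat.lt_of_succ_lt hi⟩).inst.body ↔ (a ∈ Bh ∨ a ∈ Bb)) ∧
      (∀ a, ¬(a ∈ Bh ∧ a ∈ Bb)) ∧
      (P.get ⟨i+1, hi⟩).atom ∈ Bb ∧
      ((P.get ⟨i, Nat.lt_of_succ_lt hi⟩).atom.varsF ∪ atomsVars Bh) ∩ atomsVars Bb = ∅

def TypeIII (P : List (Step C)) : Prop :=
  ∀ i (hi : i + 1 < P.length), ∀ β ∈ (P.get ⟨i, Nat.lt_of_succ_lt hi⟩).inst.body,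
    (P.get ⟨i, Nat.lt_of_succ_lt hi⟩).inst.varsF ⊆ β.varsF

def TypeIV (P : List (Step C)) : Prop :=
  ∀ i (hi : i + 1 < P.length), ∀ β ∈ (P.get ⟨i, Nat.lt_of_succ_lt hi⟩).inst.body,
    β ≠ (P.get ⟨i+1, hi⟩).atom →
    ((P.get ⟨i+1, hi⟩).atom.varsF ∩ β.varsF).Nonempty →
    ∀ v ∈ (P.get ⟨i+1, hi⟩).atom.varsF ∩ β.varsF,
      ∀ j (hj : j < P.length), j ≤ i → v ∈ (P.get ⟨j, hj⟩).atom.varsF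

def TypeV (P : List (Step C)) : Prop :=
  ∃ (i : ℕ) (hi : i + 1 < P.length),
    ∃ Bh Bb : List (Atom C),
      (∀ a, a ∈ (P.get ⟨i, Nat.lt_of_succ_lt hi⟩).inst.body ↔ (a ∈ Bh ∨ a ∈ Bb)) ∧
      (∀ a, ¬(a ∈ Bh ∧ a ∈ Bb)) ∧
      (∀ j (hj : j < P.length), i + 1 ≤ j → (P.get ⟨j, hj⟩).atom ∉ Bh) ∧
      atomsNulls Bh ≠ ∅

/-- Generalised loop restricted (GLR) sets of TGDs. -/
def GLR (Sg : Set (TGD C)) : Prop :=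
  ∀ P, IsLoopPattern Sg P → TypeI P ∨ TypeII P ∨ TypeIII P ∨ TypeIV P ∨ TypeV P

/-- `N` bounds ∼-distinct derivation paths of `Sg`. -/
def PathBound (Sg : Set (TGD C)) (N : ℕ) : Prop :=
  ∀ P : List (Step C), IsDerivationPath Sg P → N < P.length →
    ∃ (i j : ℕ) (hi : i < P.length) (hj : j < P.length), i < j ∧
      PairComp (P.get ⟨i, hi⟩) (P.get ⟨j, hj⟩)


/-- Maximal number of distinct variables of a rule of the Datalog program. -/
def maxArt (Pg : List (TGD Bool)) : ℕ := (Pg.map (fun σ => σ.varsF.card)).foldr max 0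

def freshBase (σ : TGD Bool) : ℕ := σ.varsF.sup id + 1

/-- The padding tuple `X X'`: all the rule variables, padded with fresh distinct
variables up to length `maxArt Pg`. -/
def padList (Pg : List (TGD Bool)) (σ : TGD Bool) : List (Term Bool) :=
  σ.varsList.map Term.var ++
    (List.range (maxArt Pg - σ.varsF.card)).map (fun k => Term.var (freshBase σ + k))

/-- Pad an atom with the tuple `X X'` and the constant `0̄` (i.e. `false`). -/
def padAtom (Pg : List (TGD Bool)) (σ : TGD Bool) (a : Atom Bool) : Atom Bool :=
  ⟨a.pred, a.args ++ padList Pg σ ++ [Term.const false]⟩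

/-- The padded TGD obtained from a Datalog rule. -/
def transformRule (Pg : List (TGD Bool)) (σ : TGD Bool) : TGD Bool :=
  ⟨σ.body.map (padAtom Pg σ), padAtom Pg σ σ.head⟩

def SigmaOf (Pg : List (TGD Bool)) : Set (TGD Bool) :=
  {τ | ∃ σ ∈ Pg, τ = transformRule Pg σ}

/-!
Every atom of a transformed rule, head or body, contains the whole padding tuple `X X'`,
which already contains all variables of the rule; so all atoms of the rule have the same
variables. Substitution preserves this, and consecutive atoms of a derivation path are the
head and a body atom of one instantiated rule, so every atom along the path, and every body
atom of its rules, has the same variable set. Then `body_h = ∅` satisfies the LR condition: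
`var(α_i) ∩ var(body(ρ_i)) = var(α_i) = ⋂_j var(α_j)`.
-/

section UniformVars

theorem Term.mem_varsF {t : Term C} {v : ℕ} : v ∈ t.varsF ↔ t = .var v := by
  cases t <;> simp [Term.varsF, eq_comm]

theorem Atom.mem_varsF {a : Atom C} {v : ℕ} : v ∈ a.varsF ↔ .var v ∈ a.args := by
  unfold Atom.varsF
  induction a.args with
  | nil => simp
  | cons t l ih => simp [ih, Term.mem_varsF, eq_comm]

theorem mem_atomsVars {l : List (Atom C)} {v : ℕ} : v ∈ atomsVars l ↔ ∃ a ∈ l, v ∈ a.varsF := by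
  unfold atomsVars
  induction l with
  | nil => simp
  | cons a l ih => simp [ih]

theorem atomsVars_eq_of_forall_varsF_eq {l : List (Atom C)} {W : Finset ℕ} (hne : l ≠ [])
    (h : ∀ a ∈ l, a.varsF = W) : atomsVars l = W := by
  obtain ⟨b, hb⟩ := List.exists_mem_of_ne_nil l hne
  ext v
  rw [mem_atomsVars]
  exact ⟨fun ⟨a, ha, hv⟩ => h a ha ▸ hv, fun hv => ⟨b, hb, (h b hb).symm ▸ hv⟩⟩

theorem Atom.mem_varsF_apply {θ : Subst C} {a : Atom C} {v : ℕ} :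
    v ∈ (a.apply θ).varsF ↔ ∃ w ∈ a.varsF, θ w = .var v := by
  simp only [Atom.apply, Atom.mem_varsF, List.mem_map]
  constructor
  · rintro ⟨t, ht, htv⟩
    cases t with
    | var w => exact ⟨w, ht, htv⟩
    | const c => cases htv
    | null n => cases htv
  · rintro ⟨w, hw, hθ⟩
    exact ⟨.var w, hw, hθ⟩

theorem Atom.varsF_apply_congr (θ : Subst C) {a b : Atom C} (h : a.varsF = b.varsF) :
    (a.apply θ).varsF = (b.apply θ).varsF := by
  ext v
  simp only [Atom.mem_varsF_apply, h]

def TGD.HasUniformVars (σ : TGD C) : Prop := ∀ b ∈ σ.body, b.varsF = σ.head.varsF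

theorem TGD.HasUniformVars.applyS {σ : TGD C} (hσ : σ.HasUniformVars) (θ : Subst C) :
    (σ.applyS θ).HasUniformVars := by
  intro b hb
  obtain ⟨a, ha, rfl⟩ := List.mem_map.mp hb
  exact Atom.varsF_apply_congr θ (hσ a ha)

variable {Sg : Set (TGD C)} {P : List (Step C)}

theorem IsDerivationPath.inst_body_varsF_eq (hSg : ∀ σ ∈ Sg, σ.HasUniformVars)
    (hP : IsDerivationPath Sg P) {s : Step C} (hs : s ∈ P) :
    ∀ b ∈ s.inst.body, b.varsF = s.atom.varsF := by
  obtain ⟨hrule, hatom⟩ := hP.1 s hs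
  rw [hatom]
  exact (hSg _ hrule).applyS s.θ

theorem IsDerivationPath.atom_varsF_eq_get_zero (hSg : ∀ σ ∈ Sg, σ.HasUniformVars)
    (hP : IsDerivationPath Sg P) (h0 : 0 < P.length) :
    ∀ i (hi : i < P.length), (P.get ⟨i, hi⟩).atom.varsF = (P.get ⟨0, h0⟩).atom.varsF
  | 0, _ => rfl
  | i + 1, hi => by
    rw [← hP.atom_varsF_eq_get_zero hSg h0 i (Nat.lt_of_succ_lt hi)]
    exact hP.inst_body_varsF_eq hSg (List.get_mem _ _) _ (hP.2.1 i hi)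

theorem IsDerivationPath.interVars_eq (hSg : ∀ σ ∈ Sg, σ.HasUniformVars)
    (hP : IsDerivationPath Sg P) {i : ℕ} (hi : i < P.length) :
    interVars P = ((P.get ⟨i, hi⟩).atom.varsF : Set ℕ) := by
  have h0 : 0 < P.length := Nat.zero_lt_of_lt hi
  ext v
  refine ⟨fun hv => hv _ (List.get_mem _ _), fun hv s hs => ?_⟩
  obtain ⟨⟨j, hj⟩, rfl⟩ := List.mem_iff_get.mp hs
  rwa [hP.atom_varsF_eq_get_zero hSg h0 j hj, ← hP.atom_varsF_eq_get_zero hSg h0 i hi]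

theorem IsDerivationPath.inter_atomsVars_body_eq (hSg : ∀ σ ∈ Sg, σ.HasUniformVars)
    (hP : IsDerivationPath Sg P) {i : ℕ} (hi : i + 1 < P.length) :
    ((((P.get ⟨i, Nat.lt_of_succ_lt hi⟩).atom.varsF ∩
        atomsVars (P.get ⟨i, Nat.lt_of_succ_lt hi⟩).inst.body : Finset ℕ)) : Set ℕ)
      = interVars P := by
  have hbody := hP.inst_body_varsF_eq hSg (List.get_mem P ⟨i, Nat.lt_of_succ_lt hi⟩)
  rw [atomsVars_eq_of_forall_varsF_eq (List.ne_nil_of_mem (hP.2.1 i hi)) hbody,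
    Finset.inter_self, hP.interVars_eq hSg]

theorem loopRestricted_of_hasUniformVars (hSg : ∀ σ ∈ Sg, σ.HasUniformVars) :
    LoopRestricted Sg := by
  intro P hLP i hi
  refine ⟨[], (P.get ⟨i, Nat.lt_of_succ_lt hi⟩).inst.body, by simp, by simp, hLP.1.2.1 i hi, ?_⟩
  simpa [atomsVars] using hLP.1.inter_atomsVars_body_eq hSg hi

end UniformVars

theorem mem_padList_of_mem_varsF {Pg : List (TGD Bool)} {σ : TGD Bool} {v : ℕ}
    (hv : v ∈ σ.varsF) : .var v ∈ padList Pg σ :=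
  List.mem_append_left _ (List.mem_map_of_mem (Finset.mem_sort _ |>.mpr hv))

theorem padAtom_varsF {Pg : List (TGD Bool)} {σ : TGD Bool} {a : Atom Bool}
    (ha : a.varsF ⊆ σ.varsF) (v : ℕ) : v ∈ (padAtom Pg σ a).varsF ↔ .var v ∈ padList Pg σ := by
  simp only [padAtom, Atom.mem_varsF, List.mem_append, List.mem_singleton, reduceCtorEq,
    or_false, or_iff_right_iff_imp]
  exact fun h => mem_padList_of_mem_varsF (ha (Atom.mem_varsF.mpr h))

theorem transformRule_hasUniformVars (Pg : List (TGD Bool)) (σ : TGD Bool) :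
    (transformRule Pg σ).HasUniformVars := by
  have hsub : ∀ a ∈ σ.head :: σ.body, a.varsF ⊆ σ.varsF := fun a ha v hv =>
    mem_atomsVars.mpr ⟨a, ha, hv⟩
  intro b hb
  obtain ⟨a, ha, rfl⟩ := List.mem_map.mp hb
  ext v
  exact (padAtom_varsF (hsub a (List.mem_cons_of_mem _ ha)) v).trans
    (padAtom_varsF (hsub _ List.mem_cons_self) v).symm

theorem sigmaOf_hasUniformVars (Pg : List (TGD Bool)) : ∀ τ ∈ SigmaOf Pg, τ.HasUniformVars := by
  rintro τ ⟨σ, -, rfl⟩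
  exact transformRule_hasUniformVars Pg σ

theorem datalog_reduction_is_LR_general (Pg : List (TGD Bool)) :
    (∀ P : List (Step Bool), IsLoopPattern (SigmaOf Pg) P →
      ∀ (i : ℕ) (hi : i + 1 < P.length),
        ((((P.get ⟨i, Nat.lt_of_succ_lt hi⟩).atom.varsF ∩
            atomsVars (P.get ⟨i, Nat.lt_of_succ_lt hi⟩).inst.body : Finset ℕ)) : Set ℕ)
          = interVars P) ∧
    LoopRestricted (SigmaOf Pg) :=
  ⟨fun _ hLP _ hi => hLP.1.inter_atomsVars_body_eq (sigmaOf_hasUniformVars Pg) hi,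
    loopRestricted_of_hasUniformVars (sigmaOf_hasUniformVars Pg)⟩

/-- The Datalog-to-TGD reduction produces a loop restricted set of TGDs: every
loop pattern of `SigmaOf Pg` satisfies the LR splitting condition with
`body_h = ∅` (so that `var(α_i) ∩ var(body(ρ_i)) = ⋂_j var(α_j)`), and hence
`SigmaOf Pg` is loop restricted. -/
theorem datalog_reduction_is_LR (Pg : List (TGD Bool))
    (hdl : ∀ σ ∈ Pg, σ.exVars = ∅ ∧ σ.nullsF = ∅) :
    (∀ P : List (Step Bool), IsLoopPattern (SigmaOf Pg) P →
      ∀ (i : ℕ) (hi : i + 1 < P.length),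
        ((((P.get ⟨i, Nat.lt_of_succ_lt hi⟩).atom.varsF ∩
            atomsVars (P.get ⟨i, Nat.lt_of_succ_lt hi⟩).inst.body : Finset ℕ)) : Set ℕ)
          = interVars P) ∧
    LoopRestricted (SigmaOf Pg) :=
  datalog_reduction_is_LR_general Pg

end Paper
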